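/- arXiv:math/0605117 — 6 statements merged into one kernel-verified Lean document; each statement's English description precedes it below -/
import Mathlib

section
/- Let D = (V,A) be a finite acyclic directed graph with a unique sink s, in which every non-sink vertex has out-degree at most 4, and let λ : V → ℤ be effectively decreasing: λ is monotone decreasing along arcs, and every vertex v ≠ s has an out-arc (v,w) with λ(v) > λ(w). Then for any starting vertex, the expected number of steps of the random walk (choosing out-arcs uniformly at random) before reaching s is at most 4·|λ(V)|, where |λ(V)| is the number of distinct values taken by λ. -/
/-- On a finite acyclic digraph with unique sink `s`, out-degrees at
most 4, and an effectively decreasing function `lam`, the expected number of steps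
`E v` of the uniform random walk from any vertex `v` to `s` is at most `4·|lam(V)|`. -/
theorem random_walk_expected_le_four_mul {V : Type*} [Fintype V] [DecidableEq V]
    (A : V → Finset V)
    (hacyc : ∀ v : V, ¬ Relation.TransGen (fun x y => y ∈ A x) v v)
    (s : V) (hs : A s = ∅) (hsink : ∀ v, A v = ∅ → v = s)
    (hdeg : ∀ v, (A v).card ≤ 4)
    (lam : V → ℤ)
    (hmono : ∀ v, ∀ w ∈ A v, lam w ≤ lam v)
    (heff : ∀ v, v ≠ s → ∃ w ∈ A v, lam w < lam v)
    (E : V → ℝ) (hEs : E s = 0)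
    (hE : ∀ v, v ≠ s → E v = 1 + (∑ w ∈ A v, E w) / (A v).card) :
    ∀ v, E v ≤ 4 * ((Finset.univ.image lam).card : ℝ) := by
  classical
  -- The edge relation is well-founded since its transitive closure is irreflexive.
  have hwf : WellFounded (fun x y : V => x ∈ A y) := by
    have hirr : IsIrrefl V (Relation.TransGen (fun x y : V => x ∈ A y)) := by
      constructor
      intro v hv
      exact hacyc v ((Relation.transGen_swap).mp hv)
    have htr : IsTrans V (Relation.TransGen (fun x y : V => x ∈ A y)) :=
      ⟨fun _ _ _ h1 h2 => h1.trans h2⟩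
    have hwf' : WellFounded (Relation.TransGen (fun x y : V => x ∈ A y)) :=
      Finite.wellFounded_of_trans_of_irrefl _
    exact Subrelation.wf (fun h => Relation.TransGen.single h) hwf'
  set T : Finset ℤ := Finset.univ.image lam with hT
  set g : V → ℕ := fun v => (T.filter (fun x => x ≤ lam v)).card with hg
  have hgT : ∀ v, g v ≤ T.card := fun v => Finset.card_filter_le _ _
  have key : ∀ v, E v ≤ 4 * (g v : ℝ) := by
    intro v
    induction v using hwf.induction with
    | _ v ih =>
    by_cases hv : v = s
    · subst hv
      rw [hEs]
      positivity
    · obtain ⟨w₀, hw₀A, hw₀⟩ := heff v hv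
      have hdpos : 0 < (A v).card := Finset.card_pos.mpr ⟨w₀, hw₀A⟩
      have hsubg : ∀ w ∈ A v, g w ≤ g v := by
        intro w hw
        apply Finset.card_le_card
        intro x hx
        simp only [Finset.mem_filter] at hx ⊢
        exact ⟨hx.1, hx.2.trans (hmono v w hw)⟩
      have hlt : g w₀ + 1 ≤ g v := by
        have hsub : T.filter (fun x => x ≤ lam w₀) ⊆ T.filter (fun x => x ≤ lam v) := by
          intro x hx
          simp only [Finset.mem_filter] at hx ⊢
          exact ⟨hx.1, hx.2.trans (le_of_lt hw₀)⟩
        have hss : T.filter (fun x => x ≤ lam w₀) ⊂ T.filter (fun x => x ≤ lam v) := by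
          rw [Finset.ssubset_iff_of_subset hsub]
          refine ⟨lam v, ?_, ?_⟩
          · simp only [Finset.mem_filter]
            exact ⟨Finset.mem_image_of_mem lam (Finset.mem_univ v), le_refl _⟩
          · simp only [Finset.mem_filter, not_and, not_le]
            intro _
            exact hw₀
        exact Nat.succ_le_of_lt (Finset.card_lt_card hss)
      -- bound the sum
      have h1 : ∀ w ∈ A v, E w ≤ 4 * (g w : ℝ) := fun w hw => ih w hw
      have hsum1 : ∑ w ∈ A v, E w ≤ ∑ w ∈ A v, 4 * (g w : ℝ) :=
        Finset.sum_le_sum h1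
      have hsum2 : ∑ w ∈ A v, 4 * (g w : ℝ) ≤ ((A v).card : ℝ) * (4 * (g v : ℝ)) - 4 := by
        rw [← Finset.add_sum_erase _ _ hw₀A]
        have herase : ∑ w ∈ (A v).erase w₀, 4 * (g w : ℝ) ≤
            (((A v).erase w₀).card : ℝ) * (4 * (g v : ℝ)) := by
          rw [← nsmul_eq_mul]
          apply Finset.sum_le_card_nsmul
          intro w hw
          have := hsubg w (Finset.mem_of_mem_erase hw)
          have : (g w : ℝ) ≤ (g v : ℝ) := by exact_mod_cast this
          linarith
        have hcarderase : (((A v).erase w₀).card : ℝ) = ((A v).card : ℝ) - 1 := by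
          rw [Finset.card_erase_of_mem hw₀A]
          have : 1 ≤ (A v).card := hdpos
          push_cast [this]
          ring
        have hw₀g : (g w₀ : ℝ) ≤ (g v : ℝ) - 1 := by
          have : (g w₀ : ℝ) + 1 ≤ (g v : ℝ) := by exact_mod_cast hlt
          linarith
        rw [hcarderase] at herase
        have hgv0 : (0:ℝ) ≤ (g v : ℝ) := Nat.cast_nonneg _
        nlinarith
      have hd4 : ((A v).card : ℝ) ≤ 4 := by exact_mod_cast hdeg v
      have hdpos' : (0:ℝ) < ((A v).card : ℝ) := by exact_mod_cast hdpos
      rw [hE v hv]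
      have hdiv : (∑ w ∈ A v, E w) / ((A v).card : ℝ) ≤ 4 * (g v : ℝ) - 1 := by
        rw [div_le_iff₀ hdpos']
        nlinarith
      linarith
  intro v
  have h1 := key v
  have h2 : (g v : ℝ) ≤ (T.card : ℝ) := by exact_mod_cast hgT v
  calc E v ≤ 4 * (g v : ℝ) := h1
    _ ≤ 4 * (T.card : ℝ) := by linarith
end

section
/- Let D = (V,A) be a finite acyclic directed graph, Π = {V₁, …, V_ℓ} a partition of V such that the quotient digraph D/Π is acyclic, and for each i let λ_i : V_i → ℤ be monotone decreasing on the subgraph induced on V_i. Then there exists a function λ : V → ℤ that is monotone decreasing on all of D, restricts on each V_i to λ_i shifted by a constant, and whose image has cardinality at most the sum over i of |λ_i(V_i)|. -/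
/-- Given a partition of a finite acyclic digraph whose quotient is
acyclic and monotone decreasing functions on the induced subgraphs of the parts,
there is a globally monotone decreasing function restricting to each part's
function shifted by a constant, with image size at most the sum of the local image sizes. -/
theorem glue_monotone_functions {V : Type*} [Fintype V] [DecidableEq V] (A : V → V → Prop)
    (hacyc : ∀ v : V, ¬ Relation.TransGen A v v)
    (ℓ : ℕ) (parts : Fin ℓ → Finset V)
    (hcover : ∀ v : V, ∃ i, v ∈ parts i)
    (hdisj : ∀ i j, i ≠ j → Disjoint (parts i) (parts j))
    (hquot : ∀ i : Fin ℓ, ¬ Relation.TransGen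
      (fun i j : Fin ℓ => i ≠ j ∧ ∃ v ∈ parts i, ∃ w ∈ parts j, A v w) i i)
    (lams : (i : Fin ℓ) → V → ℤ)
    (hmono : ∀ i, ∀ v ∈ parts i, ∀ w ∈ parts i, A v w → lams i w ≤ lams i v) :
    ∃ lam : V → ℤ,
      (∀ v w, A v w → lam w ≤ lam v) ∧
      (∀ i : Fin ℓ, ∃ c : ℤ, ∀ v ∈ parts i, lam v = lams i v + c) ∧
      (Finset.univ.image lam).card ≤ ∑ i, ((parts i).image (lams i)).card := by
  classical
  set Q : Fin ℓ → Fin ℓ → Prop :=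
    fun i j => i ≠ j ∧ ∃ v ∈ parts i, ∃ w ∈ parts j, A v w with hQdef
  set ρ : Fin ℓ → ℕ :=
    fun i => (Finset.univ.filter (fun j => Relation.TransGen Q j i)).card with hρdef
  have hρ : ∀ i j, Q i j → ρ i < ρ j := by
    intro i j hij
    apply Finset.card_lt_card
    constructor
    · intro k hk
      simp only [Finset.mem_filter, Finset.mem_univ, true_and] at hk ⊢
      exact hk.trans (Relation.TransGen.single hij)
    · intro hsub
      have hi : i ∈ Finset.univ.filter (fun k => Relation.TransGen Q k j) := by
        simp only [Finset.mem_filter, Finset.mem_univ, true_and]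
        exact Relation.TransGen.single hij
      have := hsub hi
      simp only [Finset.mem_filter, Finset.mem_univ, true_and] at this
      exact hquot i this
  set s : Fin ℓ → ℤ :=
    fun i => if h : (parts i).Nonempty then (parts i).inf' h (lams i) else 0 with hsdef
  set S : Fin ℓ → ℤ :=
    fun i => if h : (parts i).Nonempty then (parts i).sup' h (lams i) else 0 with hSdef
  set K : ℤ := 1 + ∑ i, max (S i - s i) 0 with hKdef
  have hK1 : 1 ≤ K := by
    have : (0 : ℤ) ≤ ∑ i, max (S i - s i) 0 :=
      Finset.sum_nonneg fun i _ => le_max_right _ _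
    omega
  have hKi : ∀ i, S i - s i ≤ K - 1 := by
    intro i
    have h1 : max (S i - s i) 0 ≤ ∑ j, max (S j - s j) 0 :=
      Finset.single_le_sum (f := fun j => max (S j - s j) 0)
        (fun j _ => le_max_right _ _) (Finset.mem_univ i)
    have h2 : S i - s i ≤ max (S i - s i) 0 := le_max_left _ _
    omega
  set c : Fin ℓ → ℤ := fun i => -(ρ i : ℤ) * K - s i with hcdef
  set idx : V → Fin ℓ := fun v => (hcover v).choose with hidxdef
  have hidx : ∀ v, v ∈ parts (idx v) := fun v => (hcover v).choose_spec
  have hidx_eq : ∀ i v, v ∈ parts i → idx v = i := by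
    intro i v hv
    by_contra h
    exact Finset.disjoint_left.mp (hdisj _ _ h) (hidx v) hv
  set lam : V → ℤ := fun v => lams (idx v) v + c (idx v) with hlamdef
  have hlam_on : ∀ i, ∀ v ∈ parts i, lam v = lams i v + c i := by
    intro i v hv
    simp only [hlamdef, hidx_eq i v hv]
  have hlb : ∀ i, ∀ v ∈ parts i, -(ρ i : ℤ) * K ≤ lam v := by
    intro i v hv
    rw [hlam_on i v hv]
    have hne : (parts i).Nonempty := ⟨v, hv⟩
    have hs : s i ≤ lams i v := by
      simp only [hsdef, dif_pos hne]
      exact Finset.inf'_le _ hv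
    simp only [hcdef]; omega
  have hub : ∀ i, ∀ v ∈ parts i, lam v ≤ -(ρ i : ℤ) * K + (K - 1) := by
    intro i v hv
    rw [hlam_on i v hv]
    have hne : (parts i).Nonempty := ⟨v, hv⟩
    have hS : lams i v ≤ S i := by
      simp only [hSdef, dif_pos hne]
      exact Finset.le_sup' _ hv
    have := hKi i
    simp only [hcdef]; omega
  refine ⟨lam, ?_, ?_, ?_⟩
  · intro v w hvw
    by_cases h : idx v = idx w
    · have hw : w ∈ parts (idx v) := h ▸ hidx w
      have := hmono (idx v) v (hidx v) w hw hvw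
      rw [hlam_on (idx v) w hw, hlam_on (idx v) v (hidx v)]
      omega
    · have hQvw : Q (idx v) (idx w) := ⟨h, v, hidx v, w, hidx w, hvw⟩
      have hlt := hρ _ _ hQvw
      have hlt' : (ρ (idx v) : ℤ) + 1 ≤ (ρ (idx w) : ℤ) := by exact_mod_cast hlt
      have h1 := hub (idx w) w (hidx w)
      have h2 := hlb (idx v) v (hidx v)
      have h3 : -(ρ (idx w) : ℤ) * K ≤ -((ρ (idx v) : ℤ) + 1) * K := by
        apply mul_le_mul_of_nonneg_right _ (by omega)
        omega
      nlinarith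
  · intro i
    exact ⟨c i, hlam_on i⟩
  · have hsub : Finset.univ.image lam ⊆
        Finset.univ.biUnion (fun i => (parts i).image lam) := by
      intro x hx
      simp only [Finset.mem_image, Finset.mem_univ, true_and] at hx
      obtain ⟨v, rfl⟩ := hx
      simp only [Finset.mem_biUnion, Finset.mem_univ, true_and, Finset.mem_image]
      exact ⟨idx v, v, hidx v, rfl⟩
    refine (Finset.card_le_card hsub).trans ((Finset.card_biUnion_le).trans ?_)
    apply Finset.sum_le_sum
    intro i _
    have himg : (parts i).image lam = ((parts i).image (lams i)).image (· + c i) := by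
      rw [Finset.image_image]
      exact Finset.image_congr fun v hv => hlam_on i v hv
    rw [himg]
    exact Finset.card_image_le
end

section
/- (Gale's evenness condition, d = 4.) For n ≥ 5, let the cyclic polytope C(n) ⊂ ℝ⁴ be the convex hull of the points v_i = (i, i², i³, i⁴) for i ∈ {0,1,…,n−1}. A 4-element subset S ⊂ {0,…,n−1} spans a facet of C(n) (i.e. the points {v_i : i ∈ S} lie on a common supporting hyperplane) if and only if for all i < j with i,j ∉ S, the number of elements k ∈ S with i < k < j is even. -/
open Polynomial Finset

lemma sign_prod_aux (S : Finset ℕ) (i : ℕ) (hi : i ∉ S) :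
    (0:ℝ) < (-1) ^ ((S.filter fun k => i < k).card) * ∏ s ∈ S, ((i:ℝ) - s) := by
  classical
  rw [← Finset.prod_filter_mul_prod_filter_not S (fun k => i < k) (fun s => ((i:ℝ) - s))]
  have h1 : ∏ s ∈ S.filter (fun k => i < k), ((i:ℝ) - s)
      = (-1) ^ ((S.filter fun k => i < k).card) * ∏ s ∈ S.filter (fun k => i < k), ((s:ℝ) - i) := by
    rw [← Finset.prod_const (-1:ℝ), ← Finset.prod_mul_distrib]
    exact Finset.prod_congr rfl (fun s _ => by ring)
  rw [h1]
  have hA : 0 < ∏ s ∈ S.filter (fun k => i < k), ((s:ℝ) - i) := by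
    apply Finset.prod_pos
    intro s hs
    have := (Finset.mem_filter.mp hs).2
    have : (i:ℝ) < s := by exact_mod_cast this
    linarith
  have hB : 0 < ∏ s ∈ S.filter (fun k => ¬ i < k), ((i:ℝ) - s) := by
    apply Finset.prod_pos
    intro s hs
    obtain ⟨hsS, hns⟩ := Finset.mem_filter.mp hs
    have hne : s ≠ i := fun h => hi (h ▸ hsS)
    have : s < i := lt_of_le_of_ne (not_lt.mp hns) hne
    have : (s:ℝ) < i := by exact_mod_cast this
    linarith
  have hsq : (0:ℝ) < ((-1) ^ ((S.filter fun k => i < k).card))^2 := by positivity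
  nlinarith [mul_pos hA hB]

lemma count_split (S : Finset ℕ) {i j : ℕ} (hij : i < j) (hj : j ∉ S) :
    (S.filter fun k => i < k).card
      = (S.filter fun k => i < k ∧ k < j).card + (S.filter fun k => j < k).card := by
  classical
  rw [← Finset.filter_filter]
  rw [← Finset.card_filter_add_card_filter_not (s := S.filter fun k => i < k)
    (p := fun k => k < j)]
  congr 1
  rw [Finset.filter_filter]
  apply congrArg Finset.card
  apply Finset.filter_congr
  intro k hk
  have hne : k ≠ j := fun h => hj (h ▸ hk)
  constructor
  · intro h; omega
  · intro h; omega

/-- Gale's evenness condition, d = 4: a 4-subset `S` of `{0,…,n-1}`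
spans a facet of the cyclic polytope `C(n)` (i.e. the corresponding moment-curve
points lie on a common supporting hyperplane) iff between any two non-elements of
`S` there is an even number of elements of `S`. -/
theorem gale_evenness_dim_four (n : ℕ) (hn : 5 ≤ n)
    (pt : ℕ → (Fin 4 → ℝ)) (hpt : ∀ i : ℕ, pt i = fun m : Fin 4 => (i : ℝ) ^ ((m : ℕ) + 1))
    (S : Finset ℕ) (hS : S ⊆ Finset.range n) (hcard : S.card = 4) :
    (∃ (f : (Fin 4 → ℝ) →ₗ[ℝ] ℝ) (c : ℝ), f ≠ 0 ∧
        (∀ i < n, f (pt i) ≤ c) ∧ (∀ i ∈ S, f (pt i) = c)) ↔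
      (∀ i ∈ Finset.range n, ∀ j ∈ Finset.range n, i < j → i ∉ S → j ∉ S →
        Even ((S.filter fun k => i < k ∧ k < j).card)) := by
  classical
  set P : ℝ[X] := ∏ s ∈ S, (X - C (s:ℝ)) with hP
  have hPmonic : P.Monic := monic_prod_of_monic _ _ fun s _ => monic_X_sub_C _
  have hPdeg : P.natDegree = 4 := by
    rw [hP, natDegree_prod _ _ (fun s _ => X_sub_C_ne_zero _)]
    simp only [natDegree_X_sub_C, Finset.sum_const, smul_eq_mul, mul_one, hcard]
  have hPeval : ∀ t : ℝ, P.eval t = ∏ s ∈ S, (t - (s:ℝ)) := by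
    intro t; simp [hP, eval_prod]
  have hPzero : ∀ s ∈ S, P.eval ((s:ℕ):ℝ) = 0 := by
    intro s hs; rw [hPeval]
    exact Finset.prod_eq_zero hs (by ring)
  have hPne : ∀ t : ℕ, t ∉ S → (∏ s ∈ S, ((t:ℝ) - s)) ≠ 0 := by
    intro t ht
    apply Finset.prod_ne_zero_iff.mpr
    intro s hs
    have : t ≠ s := fun h => ht (h ▸ hs)
    intro hc
    exact this (by exact_mod_cast sub_eq_zero.mp hc)
  constructor
  · rintro ⟨f, c, hf0, hle, heq⟩ i hi j hj hij hiS hjS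
    set a : Fin 4 → ℝ := fun m => f (fun j => if m = j then 1 else 0) with ha
    have hfx : ∀ x : Fin 4 → ℝ, f x = ∑ m : Fin 4, x m * a m := by
      intro x
      conv_lhs => rw [pi_eq_sum_univ x]
      rw [map_sum]
      exact Finset.sum_congr rfl (fun m _ => by rw [map_smul, smul_eq_mul])
    set q : ℝ[X] := C c - (C (a 0) * X + C (a 1) * X^2 + C (a 2) * X^3 + C (a 3) * X^4) with hq
    have hqeval : ∀ t : ℕ, q.eval (t:ℝ) = c - f (pt t) := by
      intro t
      rw [hpt, hfx]
      simp [hq, Fin.sum_univ_four]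
      norm_num [show ((0:Fin 4):ℕ) = 0 from rfl, show ((1:Fin 4):ℕ) = 1 from rfl,
        show ((2:Fin 4):ℕ) = 2 from rfl, show ((3:Fin 4):ℕ) = 3 from rfl]
      ring
    have hqdeg : q.natDegree ≤ 4 := by
      rw [hq]; compute_degree
    set α : ℝ := q.coeff 4 with hα
    have hr : q - C α * P = 0 := by
      apply eq_zero_of_natDegree_lt_card_of_eval_eq_zero' _ (S.image (Nat.cast : ℕ → ℝ))
      · intro x hx
        obtain ⟨s, hs, rfl⟩ := Finset.mem_image.mp hx
        rw [eval_sub, eval_mul, eval_C, hqeval, hPzero s hs, heq s hs]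
        ring
      · rw [Finset.card_image_of_injective _ Nat.cast_injective, hcard]
        have h4 : (q - C α * P).natDegree ≤ 3 := by
          apply natDegree_le_iff_coeff_eq_zero.mpr
          intro k hk
          rw [coeff_sub, coeff_C_mul]
          rcases eq_or_lt_of_le (show 4 ≤ k by omega) with h|h
          · have hc4 : P.coeff 4 = 1 := by
              rw [show (4:ℕ) = P.natDegree from hPdeg.symm]
              exact hPmonic.coeff_natDegree
            rw [← h, hc4, mul_one, hα, sub_self]
          · rw [coeff_eq_zero_of_natDegree_lt (lt_of_le_of_lt hqdeg h),
              coeff_eq_zero_of_natDegree_lt (by omega : P.natDegree < k)]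
            ring
        omega
    have hqP : q = C α * P := by
      have := sub_eq_zero.mp hr; exact this
    have hαne : α ≠ 0 := by
      intro h0
      apply hf0
      have hq0 : q = 0 := by rw [hqP, h0, map_zero, zero_mul]
      have hcoeff : ∀ m : Fin 4, a m = 0 := by
        intro m
        have hz : ∀ k : ℕ, q.coeff k = 0 := by intro k; rw [hq0]; simp
        fin_cases m
        · have := hz 1; rw [hq] at this
          simp [coeff_sub, coeff_add, coeff_C_mul, coeff_X_pow, coeff_C] at this
          exact this
        · have := hz 2; rw [hq] at this
          simp [coeff_sub, coeff_add, coeff_C_mul, coeff_X_pow, coeff_C] at this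
          exact this
        · have := hz 3; rw [hq] at this
          simp [coeff_sub, coeff_add, coeff_C_mul, coeff_X_pow, coeff_C] at this
          exact this
        · have := hz 4; rw [hq] at this
          simp [coeff_sub, coeff_add, coeff_C_mul, coeff_X_pow, coeff_C] at this
          exact this
      apply LinearMap.ext
      intro x
      rw [hfx]
      simp [hcoeff]
    have key : ∀ t : ℕ, t < n → t ∉ S →
        0 < α * (-1:ℝ)^((S.filter fun k => t < k).card) := by
      intro t htn htS
      have h1 : 0 ≤ q.eval (t:ℝ) := by
        rw [hqeval]; linarith [hle t htn]
      rw [hqP, eval_mul, eval_C, hPeval] at h1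
      have h2 := sign_prod_aux S t htS
      have hPr := hPne t htS
      have h3 : 0 < α * ∏ s ∈ S, ((t:ℝ) - s) := by
        rcases lt_or_eq_of_le h1 with h|h
        · exact h
        · exact absurd h.symm (mul_ne_zero hαne hPr)
      nlinarith [mul_pos h3 h2, sq_nonneg (∏ s ∈ S, ((t:ℝ) - s))]
    have ki := key i (Finset.mem_range.mp hi) hiS
    have kj := key j (Finset.mem_range.mp hj) hjS
    have hsum : Even ((S.filter fun k => i < k).card + (S.filter fun k => j < k).card) := by
      by_contra hodd
      have hO : Odd ((S.filter fun k => i < k).card + (S.filter fun k => j < k).card) :=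
        Nat.not_even_iff_odd.mp hodd
      have hneg : (-1:ℝ)^((S.filter fun k => i < k).card) *
          (-1:ℝ)^((S.filter fun k => j < k).card) = -1 := by
        rw [← pow_add, hO.neg_one_pow]
      nlinarith [mul_pos ki kj, sq_nonneg α]
    rw [count_split S hij hjS] at hsum
    obtain ⟨k, hk⟩ := hsum
    exact ⟨k - (S.filter fun k => j < k).card, by omega⟩
  · intro hev
    have hns : ¬ (Finset.range n ⊆ S) := by
      intro h
      have := Finset.card_le_card h
      rw [hcard, Finset.card_range] at this
      omega
    obtain ⟨i₀, hi₀⟩ := Finset.sdiff_nonempty.mpr hns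
    obtain ⟨hi₀n, hi₀S⟩ := Finset.mem_sdiff.mp hi₀
    set α : ℝ := (-1)^((S.filter fun k => i₀ < k).card) with hαdef
    have hαne : α ≠ 0 := by
      rw [hαdef]; exact pow_ne_zero _ (by norm_num)
    set q : ℝ[X] := C α * P with hqdef
    have hqdeg : q.natDegree = 4 := by
      rw [hqdef, natDegree_C_mul hαne, hPdeg]
    set b : Fin 4 → ℝ := fun m => -(q.coeff ((m:ℕ)+1)) with hb
    set f : (Fin 4 → ℝ) →ₗ[ℝ] ℝ := ∑ m : Fin 4, b m • LinearMap.proj m with hf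
    have hfx : ∀ x : Fin 4 → ℝ, f x = ∑ m : Fin 4, b m * x m := by
      intro x
      rw [hf]
      simp [LinearMap.sum_apply, LinearMap.smul_apply, LinearMap.proj_apply]
    set c : ℝ := q.coeff 0 with hc
    have hfpt : ∀ t : ℕ, f (pt t) = c - q.eval (t:ℝ) := by
      intro t
      rw [hpt, hfx]
      rw [Polynomial.eval_eq_sum_range' (show q.natDegree < 5 by omega) ((t:ℝ))]
      rw [Finset.sum_range_succ, Finset.sum_range_succ, Finset.sum_range_succ,
        Finset.sum_range_succ, Finset.sum_range_succ, Finset.sum_range_zero]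
      rw [Fin.sum_univ_four, hb, hc]
      norm_num [show ((0:Fin 4):ℕ) = 0 from rfl, show ((1:Fin 4):ℕ) = 1 from rfl,
        show ((2:Fin 4):ℕ) = 2 from rfl, show ((3:Fin 4):ℕ) = 3 from rfl]
      ring
    have hqeval : ∀ t : ℕ, q.eval (t:ℝ) = α * ∏ s ∈ S, ((t:ℝ) - s) := by
      intro t
      rw [hqdef, eval_mul, eval_C, hPeval]
    have hc4 : q.coeff 4 = α := by
      rw [hqdef, coeff_C_mul]
      rw [show (4:ℕ) = P.natDegree from hPdeg.symm, hPmonic.coeff_natDegree, mul_one]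
    have hqnonneg : ∀ t : ℕ, t < n → 0 ≤ q.eval (t:ℝ) := by
      intro t htn
      by_cases htS : t ∈ S
      · rw [hqdef, eval_mul, hPzero t htS, mul_zero]
      · rw [hqeval]
        have h2 := sign_prod_aux S t htS
        have hpar : (-1:ℝ)^((S.filter fun k => t < k).card) = α := by
          rw [hαdef]
          rcases lt_trichotomy t i₀ with h|h|h
          · have hEv := hev t (Finset.mem_range.mpr htn) i₀ hi₀n h htS hi₀S
            rw [count_split S h hi₀S, pow_add, hEv.neg_one_pow, one_mul]
          · rw [h]
          · have hEv := hev i₀ hi₀n t (Finset.mem_range.mpr htn) h hi₀S htS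
            rw [count_split S h htS, pow_add, hEv.neg_one_pow, one_mul]
        rw [← hpar]
        linarith
    refine ⟨f, c, ?_, ?_, ?_⟩
    · intro h0
      have h1 : f (fun m : Fin 4 => if m = 3 then 1 else 0) = 0 := by rw [h0]; simp
      rw [hfx, Fin.sum_univ_four] at h1
      simp at h1
      rw [hb] at h1
      simp only [show (((3:Fin 4)):ℕ) = 3 from rfl] at h1
      rw [hc4] at h1
      exact hαne (by linarith)
    · intro t htn
      rw [hfpt]
      linarith [hqnonneg t htn]
    · intro s hs
      rw [hfpt, hqdef, eval_mul, hPzero s hs, mul_zero, sub_zero]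
end

section
/- Let D be an AUSO of the graph of a simple polytope, let F and F' be two faces with nonempty intersection, let q be the unique source of F and s' the unique sink of F'. Then there exists a directed path in D from q to s'. Consequently, if D is an AUSO of a simple 3-polytope covered by two 2-faces F_i, F_j with sources q_i, q_j and sinks s_i, s_j, then the directed path γ^q between q_i and q_j and the directed path γ^s between s_i and s_j are vertex-disjoint. -/
private lemma auso_reach_sink {V : Type*} [Fintype V] (D : V → V → Prop)
    (hacyc : ∀ v : V, ¬ Relation.TransGen D v v)
    (F : Set V) (s : V)
    (huniq : ∀ v ∈ F, (∀ w ∈ F, ¬ D v w) → v = s) :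
    ∀ v ∈ F, Relation.ReflTransGen D v s := by
  haveI : IsTrans V (fun a b => Relation.TransGen D b a) := ⟨fun a b c h1 h2 => h2.trans h1⟩
  haveI : IsIrrefl V (fun a b => Relation.TransGen D b a) := ⟨fun a h => hacyc a h⟩
  have wf := Finite.wellFounded_of_trans_of_irrefl (fun a b => Relation.TransGen D b a)
  intro v
  refine wf.induction (C := fun v => v ∈ F → Relation.ReflTransGen D v s) v ?_
  intro x ih hx
  by_cases hxs : x = s
  · subst hxs; exact .refl
  · have h : ¬ ∀ w ∈ F, ¬ D x w := fun h => hxs (huniq x hx h)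
    push_neg at h
    obtain ⟨w, hwF, hDxw⟩ := h
    exact .head hDxw (ih w (Relation.TransGen.single hDxw) hwF)

private lemma auso_reach_from_source {V : Type*} [Fintype V] (D : V → V → Prop)
    (hacyc : ∀ v : V, ¬ Relation.TransGen D v v)
    (F : Set V) (q : V)
    (huniq : ∀ v ∈ F, (∀ w ∈ F, ¬ D w v) → v = q) :
    ∀ v ∈ F, Relation.ReflTransGen D q v := by
  haveI : IsTrans V (fun a b => Relation.TransGen D a b) := ⟨fun a b c h1 h2 => h1.trans h2⟩
  haveI : IsIrrefl V (fun a b => Relation.TransGen D a b) := ⟨fun a h => hacyc a h⟩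
  have wf := Finite.wellFounded_of_trans_of_irrefl (fun a b => Relation.TransGen D a b)
  intro v
  refine wf.induction (C := fun v => v ∈ F → Relation.ReflTransGen D q v) v ?_
  intro x ih hx
  by_cases hxq : x = q
  · subst hxq; exact .refl
  · have h : ¬ ∀ w ∈ F, ¬ D w x := fun h => hxq (huniq x hx h)
    push_neg at h
    obtain ⟨w, hwF, hDwx⟩ := h
    exact .tail (ih w (Relation.TransGen.single hDwx) hwF) hDwx

private lemma auso_path_seg {V : Type*} (D : V → V → Prop) (p : ℕ → V) (L : ℕ)
    (hstep : ∀ k < L, D (p k) (p (k + 1))) :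
    ∀ a b, a ≤ b → b ≤ L → Relation.ReflTransGen D (p a) (p b) := by
  intro a b hab hbL
  obtain ⟨n, rfl⟩ := Nat.exists_eq_add_of_le hab
  clear hab
  induction n with
  | zero => exact .refl
  | succ n ih =>
    have h1 : a + n < L := by omega
    exact (ih (by omega)).tail (hstep _ h1)

/-- in an AUSO of a simple 3-polytope covered by two intersecting
2-faces `Fi, Fj` with sources `qi, qj` and sinks `si, sj`, there are directed paths
from each face's source to the other face's sink, and every directed path between
the two sources is vertex-disjoint from every directed path between the two sinks. -/
theorem source_sink_paths_disjoint {V : Type*} [Fintype V]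
    (G : SimpleGraph V) (D : V → V → Prop)
    (horient : ∀ v w : V, G.Adj v w ↔ (D v w ∨ D w v))
    (hasym : ∀ v w : V, ¬ (D v w ∧ D w v))
    (hacyc : ∀ v : V, ¬ Relation.TransGen D v v)
    (hdeg : ∀ v : V, (G.neighborSet v).ncard = 3)
    (Fi Fj : Set V) (hcover : Fi ∪ Fj = Set.univ)
    (hinter : (Fi ∩ Fj).Nonempty)
    -- Fi and Fj are 2-faces: cycles of the graph
    (mi mj : ℕ) (hmi : 3 ≤ mi) (hmj : 3 ≤ mj)
    (ci : ZMod mi → V) (cj : ZMod mj → V)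
    (hciinj : Function.Injective ci) (hcjinj : Function.Injective cj)
    (hcirange : Set.range ci = Fi) (hcjrange : Set.range cj = Fj)
    (hciadj : ∀ t : ZMod mi, G.Adj (ci t) (ci (t + 1)))
    (hcjadj : ∀ t : ZMod mj, G.Adj (cj t) (cj (t + 1)))
    -- unique sources and sinks of the 2-faces
    (qi qj si sj : V) (hqiF : qi ∈ Fi) (hqjF : qj ∈ Fj) (hsiF : si ∈ Fi) (hsjF : sj ∈ Fj)
    (hqi : ∀ w ∈ Fi, ¬ D w qi) (hqi_uniq : ∀ v ∈ Fi, (∀ w ∈ Fi, ¬ D w v) → v = qi)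
    (hqj : ∀ w ∈ Fj, ¬ D w qj) (hqj_uniq : ∀ v ∈ Fj, (∀ w ∈ Fj, ¬ D w v) → v = qj)
    (hsi : ∀ w ∈ Fi, ¬ D si w) (hsi_uniq : ∀ v ∈ Fi, (∀ w ∈ Fi, ¬ D v w) → v = si)
    (hsj : ∀ w ∈ Fj, ¬ D sj w) (hsj_uniq : ∀ v ∈ Fj, (∀ w ∈ Fj, ¬ D v w) → v = sj) :
    Relation.ReflTransGen D qi sj ∧ Relation.ReflTransGen D qj si ∧
    (∀ (L L' : ℕ) (p p' : ℕ → V),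
      ((p 0 = qi ∧ p L = qj) ∨ (p 0 = qj ∧ p L = qi)) →
      (∀ k < L, D (p k) (p (k + 1))) →
      ((p' 0 = si ∧ p' L' = sj) ∨ (p' 0 = sj ∧ p' L' = si)) →
      (∀ k < L', D (p' k) (p' (k + 1))) →
      ∀ k ≤ L, ∀ k' ≤ L', p k ≠ p' k') := by
  classical
  haveI : NeZero mi := ⟨by omega⟩
  haveI : NeZero mj := ⟨by omega⟩
  -- reachability inside faces
  have Ri_sink : ∀ v ∈ Fi, Relation.ReflTransGen D v si :=
    auso_reach_sink D hacyc Fi si hsi_uniq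
  have Rj_sink : ∀ v ∈ Fj, Relation.ReflTransGen D v sj :=
    auso_reach_sink D hacyc Fj sj hsj_uniq
  have Ri_src : ∀ v ∈ Fi, Relation.ReflTransGen D qi v :=
    auso_reach_from_source D hacyc Fi qi hqi_uniq
  have Rj_src : ∀ v ∈ Fj, Relation.ReflTransGen D qj v :=
    auso_reach_from_source D hacyc Fj qj hqj_uniq
  obtain ⟨x, hxFi, hxFj⟩ := hinter
  have h1 : Relation.ReflTransGen D qi sj := (Ri_src x hxFi).trans (Rj_sink x hxFj)
  have h2 : Relation.ReflTransGen D qj si := (Rj_src x hxFj).trans (Ri_sink x hxFi)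
  -- a vertex in both faces has a neighbor in both faces
  have shared : ∀ v, v ∈ Fi → v ∈ Fj → ∃ w, G.Adj v w ∧ w ∈ Fi ∧ w ∈ Fj := by
    intro v hvFi hvFj
    rw [← hcirange] at hvFi
    rw [← hcjrange] at hvFj
    obtain ⟨t, htv⟩ := hvFi
    obtain ⟨u, huv⟩ := hvFj
    set a1 := ci (t - 1) with ha1
    set a2 := ci (t + 1) with ha2
    set b1 := cj (u - 1) with hb1
    set b2 := cj (u + 1) with hb2
    have ha1Fi : a1 ∈ Fi := by rw [← hcirange]; exact ⟨t - 1, rfl⟩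
    have ha2Fi : a2 ∈ Fi := by rw [← hcirange]; exact ⟨t + 1, rfl⟩
    have hb1Fj : b1 ∈ Fj := by rw [← hcjrange]; exact ⟨u - 1, rfl⟩
    have hb2Fj : b2 ∈ Fj := by rw [← hcjrange]; exact ⟨u + 1, rfl⟩
    have hadj_a2 : G.Adj v a2 := by rw [← htv]; exact hciadj t
    have hadj_a1 : G.Adj v a1 := by
      have := hciadj (t - 1)
      rw [sub_add_cancel] at this
      rw [← htv]; exact this.symm
    have hadj_b2 : G.Adj v b2 := by rw [← huv]; exact hcjadj u
    have hadj_b1 : G.Adj v b1 := by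
      have := hcjadj (u - 1)
      rw [sub_add_cancel] at this
      rw [← huv]; exact this.symm
    have h2i : ((2 : ℕ) : ZMod mi) ≠ 0 := by
      intro h
      rw [ZMod.natCast_eq_zero_iff] at h
      have := Nat.le_of_dvd (by norm_num) h
      omega
    have h2j : ((2 : ℕ) : ZMod mj) ≠ 0 := by
      intro h
      rw [ZMod.natCast_eq_zero_iff] at h
      have := Nat.le_of_dvd (by norm_num) h
      omega
    have ha12 : a1 ≠ a2 := by
      intro h
      have h' := hciinj h
      apply h2i
      push_cast
      linear_combination -h'
    have hb12 : b1 ≠ b2 := by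
      intro h
      have h' := hcjinj h
      apply h2j
      push_cast
      linear_combination -h'
    by_cases h11 : a1 = b1
    · exact ⟨a1, hadj_a1, ha1Fi, h11 ▸ hb1Fj⟩
    by_cases h12 : a1 = b2
    · exact ⟨a1, hadj_a1, ha1Fi, h12 ▸ hb2Fj⟩
    by_cases h21 : a2 = b1
    · exact ⟨a2, hadj_a2, ha2Fi, h21 ▸ hb1Fj⟩
    by_cases h22 : a2 = b2
    · exact ⟨a2, hadj_a2, ha2Fi, h22 ▸ hb2Fj⟩
    exfalso
    have hsub : ({a1, a2, b1, b2} : Set V) ⊆ G.neighborSet v := by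
      intro w hw
      simp only [Set.mem_insert_iff, Set.mem_singleton_iff] at hw
      rcases hw with rfl | rfl | rfl | rfl
      exacts [hadj_a1, hadj_a2, hadj_b1, hadj_b2]
    have hc1 : ({b2} : Set V).ncard = 1 := Set.ncard_singleton _
    have hc2 : ({b1, b2} : Set V).ncard = 2 := Set.ncard_pair hb12
    have hc3 : ({a2, b1, b2} : Set V).ncard = 3 := by
      rw [Set.ncard_insert_of_notMem (by simp [h21, h22]) (Set.toFinite _), hc2]
    have hc4 : ({a1, a2, b1, b2} : Set V).ncard = 4 := by
      rw [Set.ncard_insert_of_notMem (by simp [ha12, h11, h12]) (Set.toFinite _), hc3]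
    have := Set.ncard_le_ncard hsub (Set.toFinite _)
    rw [hc4, hdeg v] at this
    omega
  -- sources are distinct from sinks
  have hqisi : qi ≠ si := by
    intro h
    rw [← hcirange] at hqiF
    obtain ⟨t, ht⟩ := hqiF
    have hadj : G.Adj qi (ci (t + 1)) := ht ▸ hciadj t
    have hmem : ci (t + 1) ∈ Fi := by rw [← hcirange]; exact ⟨t + 1, rfl⟩
    rcases (horient _ _).mp hadj with hd | hd
    · exact hsi _ hmem (h ▸ hd)
    · exact hqi _ hmem hd
  have hqjsj : qj ≠ sj := by
    intro h
    rw [← hcjrange] at hqjF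
    obtain ⟨u, hu⟩ := hqjF
    have hadj : G.Adj qj (cj (u + 1)) := hu ▸ hcjadj u
    have hmem : cj (u + 1) ∈ Fj := by rw [← hcjrange]; exact ⟨u + 1, rfl⟩
    rcases (horient _ _).mp hadj with hd | hd
    · exact hsj _ hmem (h ▸ hd)
    · exact hqj _ hmem hd
  have hqisj : qi ≠ sj := by
    intro h
    obtain ⟨w, hadj, hwFi, hwFj⟩ := shared qi hqiF (h ▸ hsjF)
    rcases (horient _ _).mp hadj with hd | hd
    · exact hsj _ hwFj (h ▸ hd)
    · exact hqi _ hwFi hd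
  have hqjsi : qj ≠ si := by
    intro h
    obtain ⟨w, hadj, hwFi, hwFj⟩ := shared qj (h ▸ hsiF) hqjF
    rcases (horient _ _).mp hadj with hd | hd
    · exact hsi _ hwFi (h ▸ hd)
    · exact hqj _ hwFj hd
  refine ⟨h1, h2, ?_⟩
  intro L L' p p' hp hstep hp' hstep' k hk k' hk' heq
  -- from the end of p (a source) we can reach the start of p' (a sink), and they differ
  have hq_s : Relation.ReflTransGen D (p L) (p' 0) ∧ p L ≠ p' 0 := by
    rcases hp with ⟨_, hL⟩ | ⟨_, hL⟩ <;> rcases hp' with ⟨h0, _⟩ | ⟨h0, _⟩ <;>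
      rw [hL, h0]
    · exact ⟨h2, hqjsi⟩
    · exact ⟨Rj_sink qj hqjF, hqjsj⟩
    · exact ⟨Ri_sink qi hqiF, hqisi⟩
    · exact ⟨h1, hqisj⟩
  obtain ⟨hreach, hne⟩ := hq_s
  have htg : Relation.TransGen D (p L) (p' 0) := by
    rcases Relation.reflTransGen_iff_eq_or_transGen.mp hreach with h | h
    · exact absurd h.symm hne
    · exact h
  -- close the cycle: p' 0 →* p' k' = p k →* p L
  have hback : Relation.ReflTransGen D (p' 0) (p L) := by
    have hA : Relation.ReflTransGen D (p' 0) (p' k') :=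
      auso_path_seg D p' L' hstep' 0 k' (Nat.zero_le _) hk'
    have hB : Relation.ReflTransGen D (p k) (p L) :=
      auso_path_seg D p L hstep k L hk le_rfl
    rw [heq] at hB
    exact hA.trans hB
  exact hacyc (p L) (htg.trans_left hback)
end

section
/- In the plane ℝ², consider a closed polygonal curve π that is a simple closed curve composed of unit-length axis-parallel segments between integer points. Any polygonal path composed of axis-parallel unit segments and diagonal segments joining integer points (i,j) to (i±1, j±1) that starts at an integer point in the exterior of π and ends at an integer point in the interior of π must pass through an integer point lying on π. -/
/-- A lattice point lying on a unit axis-parallel segment (parametrized) is an endpoint. -/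
lemma lattice_on_unit (p1 q1 r1 : ℤ) (t : ℝ) (ht0 : 0 ≤ t) (ht1 : t ≤ 1)
    (hq : q1 - p1 = 1 ∨ q1 - p1 = -1)
    (e : (r1 : ℝ) = (p1 : ℝ) + t * ((q1 : ℝ) - (p1 : ℝ))) : r1 = p1 ∨ r1 = q1 := by
  rcases hq with h | h
  · have hC : (q1 : ℝ) - (p1 : ℝ) = 1 := by exact_mod_cast h
    rw [hC, mul_one] at e
    have h1 : (p1 : ℝ) ≤ (r1 : ℝ) := by linarith
    have h2 : (r1 : ℝ) ≤ (p1 : ℝ) + 1 := by linarith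
    have h1' : p1 ≤ r1 := by exact_mod_cast h1
    have h2' : r1 ≤ p1 + 1 := by exact_mod_cast h2
    omega
  · have hC : (q1 : ℝ) - (p1 : ℝ) = -1 := by exact_mod_cast h
    rw [hC] at e
    have h1 : (p1 : ℝ) - 1 ≤ (r1 : ℝ) := by linarith
    have h2 : (r1 : ℝ) ≤ (p1 : ℝ) := by linarith
    have h1' : p1 - 1 ≤ r1 := by exact_mod_cast h1
    have h2' : r1 ≤ p1 := by exact_mod_cast h2
    omega

/-- If the second coordinate of the moving point on a (possibly diagonal) unit step hits an
integer level and the step changes the second coordinate, the parameter is 0 or 1. -/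
lemma param_zero_or_one (r2 s2 p2 : ℤ) (s : ℝ) (hs0 : 0 ≤ s) (hs1 : s ≤ 1)
    (hd : s2 - r2 = 1 ∨ s2 - r2 = -1)
    (e2 : (r2 : ℝ) + s * ((s2 : ℝ) - (r2 : ℝ)) = (p2 : ℝ)) : s = 0 ∨ s = 1 := by
  rcases hd with h | h
  · have hC : (s2 : ℝ) - (r2 : ℝ) = 1 := by exact_mod_cast h
    rw [hC, mul_one] at e2
    have hs : s = ((p2 - r2 : ℤ) : ℝ) := by push_cast; linarith
    have h0 : (0 : ℤ) ≤ p2 - r2 := by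
      have : (0 : ℝ) ≤ ((p2 - r2 : ℤ) : ℝ) := hs ▸ hs0
      exact_mod_cast this
    have h1 : p2 - r2 ≤ 1 := by
      have : ((p2 - r2 : ℤ) : ℝ) ≤ 1 := hs ▸ hs1
      exact_mod_cast this
    rcases (show p2 - r2 = 0 ∨ p2 - r2 = 1 by omega) with h | h
    · left; rw [hs, h]; norm_num
    · right; rw [hs, h]; norm_num
  · have hC : (s2 : ℝ) - (r2 : ℝ) = -1 := by exact_mod_cast h
    rw [hC] at e2
    have hs : s = ((r2 - p2 : ℤ) : ℝ) := by push_cast; linarith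
    have h0 : (0 : ℤ) ≤ r2 - p2 := by
      have : (0 : ℝ) ≤ ((r2 - p2 : ℤ) : ℝ) := hs ▸ hs0
      exact_mod_cast this
    have h1 : r2 - p2 ≤ 1 := by
      have : ((r2 - p2 : ℤ) : ℝ) ≤ 1 := hs ▸ hs1
      exact_mod_cast this
    rcases (show r2 - p2 = 0 ∨ r2 - p2 = 1 by omega) with h | h
    · left; rw [hs, h]; norm_num
    · right; rw [hs, h]; norm_num

/-- Scalar core lemma: a unit (axis or diagonal) step crossing a horizontal unit curve
segment must share an endpoint with it. -/
lemma scalar_key (p1 p2 q1 r1 r2 s1 s2 : ℤ) (s t : ℝ)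
    (hs0 : 0 ≤ s) (hs1 : s ≤ 1) (ht0 : 0 ≤ t) (ht1 : t ≤ 1)
    (hq : |q1 - p1| = 1)
    (hd1 : |s1 - r1| ≤ 1) (hd2 : |s2 - r2| ≤ 1) (hne : ¬(s1 = r1 ∧ s2 = r2))
    (e1 : (r1 : ℝ) + s * ((s1 : ℝ) - (r1 : ℝ)) = (p1 : ℝ) + t * ((q1 : ℝ) - (p1 : ℝ)))
    (e2 : (r2 : ℝ) + s * ((s2 : ℝ) - (r2 : ℝ)) = (p2 : ℝ)) :
    (r1 = p1 ∧ r2 = p2) ∨ (r1 = q1 ∧ r2 = p2) ∨ (s1 = p1 ∧ s2 = p2) ∨ (s1 = q1 ∧ s2 = p2) := by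
  have hqc : q1 - p1 = 1 ∨ q1 - p1 = -1 := (abs_eq (by norm_num : (0:ℤ) ≤ 1)).mp hq
  have hd1' := abs_le.mp hd1
  have hd2' := abs_le.mp hd2
  by_cases h2 : s2 = r2
  · -- path step is horizontal; both segments lie on the line y = p2
    have hr2 : r2 = p2 := by
      have : (r2 : ℝ) = (p2 : ℝ) := by rw [h2] at e2; simpa using e2
      exact_mod_cast this
    have h1 : s1 ≠ r1 := fun h => hne ⟨h, h2⟩
    have hd : s1 - r1 = 1 ∨ s1 - r1 = -1 := by omega
    -- compare the two unit intervals on that line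
    have key : r1 = p1 ∨ r1 = q1 ∨ s1 = p1 ∨ s1 = q1 := by
      rcases hd with hA | hA <;> rcases hqc with hB | hB
      · have hCA : (s1 : ℝ) - (r1 : ℝ) = 1 := by exact_mod_cast hA
        have hCB : (q1 : ℝ) - (p1 : ℝ) = 1 := by exact_mod_cast hB
        rw [hCA, hCB, mul_one, mul_one] at e1
        have u1 : r1 ≤ p1 + 1 := by exact_mod_cast (show (r1:ℝ) ≤ (p1:ℝ) + 1 by linarith)
        have u2 : p1 ≤ r1 + 1 := by exact_mod_cast (show (p1:ℝ) ≤ (r1:ℝ) + 1 by linarith)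
        omega
      · have hCA : (s1 : ℝ) - (r1 : ℝ) = 1 := by exact_mod_cast hA
        have hCB : (q1 : ℝ) - (p1 : ℝ) = -1 := by exact_mod_cast hB
        rw [hCA, hCB, mul_one] at e1
        have u1 : r1 ≤ p1 := by exact_mod_cast (show (r1:ℝ) ≤ (p1:ℝ) by linarith)
        have u2 : p1 ≤ r1 + 2 := by exact_mod_cast (show (p1:ℝ) ≤ (r1:ℝ) + 2 by linarith)
        omega
      · have hCA : (s1 : ℝ) - (r1 : ℝ) = -1 := by exact_mod_cast hA
        have hCB : (q1 : ℝ) - (p1 : ℝ) = 1 := by exact_mod_cast hB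
        rw [hCA, hCB, mul_one] at e1
        have u1 : p1 ≤ r1 := by exact_mod_cast (show (p1:ℝ) ≤ (r1:ℝ) by linarith)
        have u2 : r1 ≤ p1 + 2 := by exact_mod_cast (show (r1:ℝ) ≤ (p1:ℝ) + 2 by linarith)
        omega
      · have hCA : (s1 : ℝ) - (r1 : ℝ) = -1 := by exact_mod_cast hA
        have hCB : (q1 : ℝ) - (p1 : ℝ) = -1 := by exact_mod_cast hB
        rw [hCA, hCB] at e1
        have u1 : r1 ≤ p1 + 1 := by exact_mod_cast (show (r1:ℝ) ≤ (p1:ℝ) + 1 by linarith)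
        have u2 : p1 ≤ r1 + 1 := by exact_mod_cast (show (p1:ℝ) ≤ (r1:ℝ) + 1 by linarith)
        omega
    rcases key with h | h | h | h
    · exact Or.inl ⟨h, hr2⟩
    · exact Or.inr (Or.inl ⟨h, hr2⟩)
    · exact Or.inr (Or.inr (Or.inl ⟨h, by omega⟩))
    · exact Or.inr (Or.inr (Or.inr ⟨h, by omega⟩))
  · -- the parameter s is 0 or 1, so the crossing point is a lattice endpoint of the path step
    have hd : s2 - r2 = 1 ∨ s2 - r2 = -1 := by omega
    rcases param_zero_or_one r2 s2 p2 s hs0 hs1 hd e2 with rfl | rfl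
    · have er2 : (r2 : ℝ) = (p2 : ℝ) := by simpa using e2
      have er1 : (r1 : ℝ) = (p1 : ℝ) + t * ((q1 : ℝ) - (p1 : ℝ)) := by simpa using e1
      have hr2 : r2 = p2 := by exact_mod_cast er2
      rcases lattice_on_unit p1 q1 r1 t ht0 ht1 hqc er1 with h | h
      · exact Or.inl ⟨h, hr2⟩
      · exact Or.inr (Or.inl ⟨h, hr2⟩)
    · have es2 : (s2 : ℝ) = (p2 : ℝ) := by
        have := e2; rw [one_mul] at this; linarith
      have es1 : (s1 : ℝ) = (p1 : ℝ) + t * ((q1 : ℝ) - (p1 : ℝ)) := by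
        have := e1; rw [one_mul] at this; linarith
      have hs2 : s2 = p2 := by exact_mod_cast es2
      rcases lattice_on_unit p1 q1 s1 t ht0 ht1 hqc es1 with h | h
      · exact Or.inr (Or.inr (Or.inl ⟨h, hs2⟩))
      · exact Or.inr (Or.inr (Or.inr ⟨h, hs2⟩))

/-- Geometric key lemma: a unit axis or diagonal lattice step crossing a unit axis-parallel
lattice segment shares an endpoint with it. -/
lemma seg_key (P Q R S : ℤ × ℤ) (hq : |Q.1 - P.1| + |Q.2 - P.2| = 1)
    (hd1 : |S.1 - R.1| ≤ 1) (hd2 : |S.2 - R.2| ≤ 1) (hne : ¬(S.1 = R.1 ∧ S.2 = R.2))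
    (x : ℝ × ℝ)
    (hx1 : x ∈ segment ℝ ((R.1 : ℝ), (R.2 : ℝ)) ((S.1 : ℝ), (S.2 : ℝ)))
    (hx2 : x ∈ segment ℝ ((P.1 : ℝ), (P.2 : ℝ)) ((Q.1 : ℝ), (Q.2 : ℝ))) :
    R = P ∨ R = Q ∨ S = P ∨ S = Q := by
  rw [segment_eq_image'] at hx1 hx2
  obtain ⟨s, ⟨hs0, hs1⟩, hxs⟩ := hx1
  obtain ⟨t, ⟨ht0, ht1⟩, hxt⟩ := hx2
  have hA1 : (R.1 : ℝ) + s * ((S.1 : ℝ) - (R.1 : ℝ)) = x.1 := by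
    have := congrArg Prod.fst hxs; simpa [Prod.smul_def, smul_eq_mul] using this
  have hA2 : (R.2 : ℝ) + s * ((S.2 : ℝ) - (R.2 : ℝ)) = x.2 := by
    have := congrArg Prod.snd hxs; simpa [Prod.smul_def, smul_eq_mul] using this
  have hB1 : (P.1 : ℝ) + t * ((Q.1 : ℝ) - (P.1 : ℝ)) = x.1 := by
    have := congrArg Prod.fst hxt; simpa [Prod.smul_def, smul_eq_mul] using this
  have hB2 : (P.2 : ℝ) + t * ((Q.2 : ℝ) - (P.2 : ℝ)) = x.2 := by
    have := congrArg Prod.snd hxt; simpa [Prod.smul_def, smul_eq_mul] using this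
  have hcases : (|Q.1 - P.1| = 1 ∧ Q.2 = P.2) ∨ (Q.1 = P.1 ∧ |Q.2 - P.2| = 1) := by
    have h := abs_nonneg (Q.1 - P.1)
    have h' := abs_nonneg (Q.2 - P.2)
    have h0 : (|Q.1 - P.1| = 1 ∧ |Q.2 - P.2| = 0) ∨ (|Q.1 - P.1| = 0 ∧ |Q.2 - P.2| = 1) := by
      omega
    rcases h0 with ⟨u, v⟩ | ⟨u, v⟩
    · exact Or.inl ⟨u, by have := abs_eq_zero.mp v; omega⟩
    · exact Or.inr ⟨by have := abs_eq_zero.mp u; omega, v⟩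
  rcases hcases with ⟨h1, h2⟩ | ⟨h1, h2⟩
  · -- horizontal curve segment
    have hQ2 : (Q.2 : ℝ) = (P.2 : ℝ) := by exact_mod_cast h2
    have e2 : (R.2 : ℝ) + s * ((S.2 : ℝ) - (R.2 : ℝ)) = (P.2 : ℝ) := by
      rw [hA2, ← hB2, hQ2]; ring
    have e1 : (R.1 : ℝ) + s * ((S.1 : ℝ) - (R.1 : ℝ))
        = (P.1 : ℝ) + t * ((Q.1 : ℝ) - (P.1 : ℝ)) := by rw [hA1, hB1]
    rcases scalar_key P.1 P.2 Q.1 R.1 R.2 S.1 S.2 s t hs0 hs1 ht0 ht1 h1 hd1 hd2 hne e1 e2 with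
      ⟨u, v⟩ | ⟨u, v⟩ | ⟨u, v⟩ | ⟨u, v⟩
    · exact Or.inl (Prod.ext u v)
    · exact Or.inr (Or.inl (Prod.ext u (by omega)))
    · exact Or.inr (Or.inr (Or.inl (Prod.ext u v)))
    · exact Or.inr (Or.inr (Or.inr (Prod.ext u (by omega))))
  · -- vertical curve segment: swap coordinates
    have hQ1 : (Q.1 : ℝ) = (P.1 : ℝ) := by exact_mod_cast h1
    have e2 : (R.1 : ℝ) + s * ((S.1 : ℝ) - (R.1 : ℝ)) = (P.1 : ℝ) := by
      rw [hA1, ← hB1, hQ1]; ring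
    have e1 : (R.2 : ℝ) + s * ((S.2 : ℝ) - (R.2 : ℝ))
        = (P.2 : ℝ) + t * ((Q.2 : ℝ) - (P.2 : ℝ)) := by rw [hA2, hB2]
    have hne' : ¬(S.2 = R.2 ∧ S.1 = R.1) := fun ⟨u, v⟩ => hne ⟨v, u⟩
    rcases scalar_key P.2 P.1 Q.2 R.2 R.1 S.2 S.1 s t hs0 hs1 ht0 ht1 h2 hd2 hd1 hne' e1 e2 with
      ⟨u, v⟩ | ⟨u, v⟩ | ⟨u, v⟩ | ⟨u, v⟩
    · exact Or.inl (Prod.ext v u)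
    · exact Or.inr (Or.inl (Prod.ext (by omega) u))
    · exact Or.inr (Or.inr (Or.inl (Prod.ext v u)))
    · exact Or.inr (Or.inr (Or.inr (Prod.ext (by omega) u)))

/-- let `π` be a simple closed polygonal curve in the plane made of
axis-parallel unit segments between integer points.  Any polygonal path of
axis-parallel unit segments and diagonal unit segments between integer points that
starts at an integer point in one complementary region of `π` and ends at an integer
point in the other must pass through an integer point of `π`. -/
theorem grid_path_meets_jordan_curve (L : ℕ) [NeZero L] (hL : 4 ≤ L)
    (c : ZMod L → ℤ × ℤ) (hinj : Function.Injective c)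
    (hstep : ∀ t : ZMod L, |(c (t + 1)).1 - (c t).1| + |(c (t + 1)).2 - (c t).2| = 1)
    (toR : ℤ × ℤ → ℝ × ℝ) (htoR : ∀ p : ℤ × ℤ, toR p = ((p.1 : ℝ), (p.2 : ℝ)))
    (curve : Set (ℝ × ℝ))
    (hcurve : curve = ⋃ t : ZMod L, segment ℝ (toR (c t)) (toR (c (t + 1))))
    (a b : ℤ × ℤ) (ha : toR a ∉ curve) (hb : toR b ∉ curve)
    (hcomp : connectedComponentIn curveᶜ (toR a) ≠ connectedComponentIn curveᶜ (toR b))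
    (N : ℕ) (p : ℕ → ℤ × ℤ) (hp0 : p 0 = a) (hpN : p N = b)
    (hstep' : ∀ t < N,
      (|(p (t + 1)).1 - (p t).1| = 1 ∧ (p (t + 1)).2 = (p t).2) ∨
      ((p (t + 1)).1 = (p t).1 ∧ |(p (t + 1)).2 - (p t).2| = 1) ∨
      (|(p (t + 1)).1 - (p t).1| = 1 ∧ |(p (t + 1)).2 - (p t).2| = 1)) :
    ∃ t ≤ N, ∃ u : ZMod L, p t = c u := by
  by_contra hcon
  push_neg at hcon
  -- every unit step of the path avoids the curve
  have hseg : ∀ t < N, segment ℝ (toR (p t)) (toR (p (t + 1))) ⊆ curveᶜ := by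
    intro t ht x hx hxc
    rw [hcurve] at hxc
    simp only [Set.mem_iUnion] at hxc
    obtain ⟨u, hxu⟩ := hxc
    have pstep := hstep' t ht
    have hd1 : |(p (t + 1)).1 - (p t).1| ≤ 1 := by
      rcases pstep with ⟨h, _⟩ | ⟨h, _⟩ | ⟨h, _⟩
      · exact le_of_eq h
      · rw [h, sub_self, abs_zero]; norm_num
      · exact le_of_eq h
    have hd2 : |(p (t + 1)).2 - (p t).2| ≤ 1 := by
      rcases pstep with ⟨_, h⟩ | ⟨_, h⟩ | ⟨_, h⟩
      · rw [h, sub_self, abs_zero]; norm_num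
      · exact le_of_eq h
      · exact le_of_eq h
    have hne : ¬((p (t + 1)).1 = (p t).1 ∧ (p (t + 1)).2 = (p t).2) := by
      rintro ⟨h1, h2⟩
      rcases pstep with ⟨h, _⟩ | ⟨_, h⟩ | ⟨h, _⟩
      · rw [h1, sub_self, abs_zero] at h; norm_num at h
      · rw [h2, sub_self, abs_zero] at h; norm_num at h
      · rw [h1, sub_self, abs_zero] at h; norm_num at h
    rw [htoR, htoR] at hx
    rw [htoR, htoR] at hxu
    rcases seg_key (c u) (c (u + 1)) (p t) (p (t + 1)) (hstep u) hd1 hd2 hne x hx hxu with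
      h | h | h | h
    · exact hcon t (le_of_lt ht) u h
    · exact hcon t (le_of_lt ht) (u + 1) h
    · exact hcon (t + 1) ht u h
    · exact hcon (t + 1) ht (u + 1) h
  -- all path points lie in the connected component of `toR a`
  have hmem : ∀ t ≤ N, toR (p t) ∈ connectedComponentIn curveᶜ (toR a) := by
    intro t
    induction t with
    | zero => intro _; rw [hp0]; exact mem_connectedComponentIn ha
    | succ t ih =>
      intro h
      have ht : t < N := h
      have h1 := ih (le_of_lt ht)
      have hsub :=
        (convex_segment (toR (p t)) (toR (p (t + 1)))).isPreconnected.subset_connectedComponentIn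
          (left_mem_segment ℝ _ _) (hseg t ht)
      have h2 : toR (p (t + 1)) ∈ connectedComponentIn curveᶜ (toR (p t)) :=
        hsub (right_mem_segment ℝ _ _)
      rw [connectedComponentIn_eq h1]
      exact h2
  have hbmem := hmem N le_rfl
  rw [hpN] at hbmem
  exact hcomp (connectedComponentIn_eq hbmem)
end

section
/- Let D = (V,A) be a finite acyclic digraph with unique sink s in which every non-sink vertex has out-degree at most d, and suppose λ : V → ℤ is monotone decreasing and every non-sink vertex has an out-arc to a vertex of strictly smaller λ-value. Then the expected number of steps of the uniform-out-arc random walk from any start vertex to s is at most d · |λ(V)|. -/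
/-- On a finite acyclic digraph with unique sink `s`, out-degrees at
most `d`, and an effectively decreasing function `lam`, the expected number of steps
`E v` of the uniform random walk from any vertex `v` to `s` is at most `d·|lam(V)|`. -/
theorem random_walk_expected_le_d_mul {V : Type*} [Fintype V] [DecidableEq V]
    (d : ℕ) (A : V → Finset V)
    (hacyc : ∀ v : V, ¬ Relation.TransGen (fun x y => y ∈ A x) v v)
    (s : V) (hs : A s = ∅) (hsink : ∀ v, A v = ∅ → v = s)
    (hdeg : ∀ v, (A v).card ≤ d)
    (lam : V → ℤ)
    (hmono : ∀ v, ∀ w ∈ A v, lam w ≤ lam v)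
    (heff : ∀ v, v ≠ s → ∃ w ∈ A v, lam w < lam v)
    (E : V → ℝ) (hEs : E s = 0)
    (hE : ∀ v, v ≠ s → E v = 1 + (∑ w ∈ A v, E w) / (A v).card) :
    ∀ v, E v ≤ (d : ℝ) * ((Finset.univ.image lam).card : ℝ) := by
  classical
  set r : V → V → Prop := fun w v => w ∈ A v with hr
  have hirr : ∀ v, ¬ Relation.TransGen r v v := by
    intro v h
    exact hacyc v ((Relation.transGen_swap).mp h)
  haveI : IsTrans V (Relation.TransGen r) := ⟨fun _ _ _ => Relation.TransGen.trans⟩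
  haveI : IsIrrefl V (Relation.TransGen r) := ⟨hirr⟩
  have hwf : WellFounded r :=
    Subrelation.wf (fun {x y} h => Relation.TransGen.single h)
      (Finite.wellFounded_of_trans_of_irrefl (Relation.TransGen r))
  set f : V → ℕ := fun v => ((Finset.univ.image lam).filter (· ≤ lam v)).card with hf
  have hfmono : ∀ v w, lam w ≤ lam v → f w ≤ f v := by
    intro v w h
    apply Finset.card_le_card
    intro x hx
    simp only [Finset.mem_filter] at hx ⊢
    exact ⟨hx.1, le_trans hx.2 h⟩
  have hfstrict : ∀ v w, lam w < lam v → f w < f v := by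
    intro v w h
    apply Finset.card_lt_card
    constructor
    · intro x hx
      simp only [Finset.mem_filter] at hx ⊢
      exact ⟨hx.1, le_trans hx.2 h.le⟩
    · intro hsub
      have : lam v ∈ (Finset.univ.image lam).filter (· ≤ lam w) := by
        apply hsub
        simp [Finset.mem_filter]
      simp only [Finset.mem_filter] at this
      exact absurd this.2 (not_le.mpr h)
  have hfle : ∀ v, f v ≤ (Finset.univ.image lam).card := fun v =>
    Finset.card_le_card (Finset.filter_subset _ _)
  have key : ∀ v, E v ≤ (d : ℝ) * f v := by
    intro v
    induction v using hwf.induction with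
    | _ v ih =>
      by_cases hvs : v = s
      · subst hvs
        rw [hEs]
        positivity
      · obtain ⟨w0, hw0A, hw0lt⟩ := heff v hvs
        have hAne : (A v).Nonempty := ⟨w0, hw0A⟩
        have hk1 : 1 ≤ (A v).card := Finset.card_pos.mpr hAne
        have hkd : (A v).card ≤ d := hdeg v
        have hd1 : 1 ≤ d := le_trans hk1 hkd
        set k : ℕ := (A v).card with hkdef
        have hkR : (0:ℝ) < k := by exact_mod_cast hk1
        -- sum bound
        have hsum : (∑ w ∈ A v, E w) ≤ (k : ℝ) * ((d:ℝ) * f v) - d := by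
          have hsplit : (∑ w ∈ A v, E w) = E w0 + ∑ w ∈ (A v).erase w0, E w :=
            (Finset.add_sum_erase _ _ hw0A).symm
          have h0 : E w0 ≤ (d:ℝ) * f w0 := ih w0 hw0A
          have h0' : (d:ℝ) * f w0 ≤ (d:ℝ) * f v - d := by
            have : (f w0 : ℝ) + 1 ≤ f v := by
              have := hfstrict v w0 hw0lt
              have : f w0 + 1 ≤ f v := this
              exact_mod_cast this
            have hdR : (1:ℝ) ≤ d := by exact_mod_cast hd1
            nlinarith
          have hrest : ∑ w ∈ (A v).erase w0, E w ≤ ((k:ℝ) - 1) * ((d:ℝ) * f v) := by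
            calc ∑ w ∈ (A v).erase w0, E w
                ≤ ∑ w ∈ (A v).erase w0, (d:ℝ) * f v := by
                  apply Finset.sum_le_sum
                  intro w hw
                  have hwA : w ∈ A v := Finset.mem_of_mem_erase hw
                  calc E w ≤ (d:ℝ) * f w := ih w hwA
                    _ ≤ (d:ℝ) * f v := by
                      have := hfmono v w (hmono v w hwA)
                      have : (f w : ℝ) ≤ f v := by exact_mod_cast this
                      nlinarith [Nat.cast_nonneg (α := ℝ) d]
              _ = ((A v).erase w0).card * ((d:ℝ) * f v) := by
                  rw [Finset.sum_const, nsmul_eq_mul]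
              _ = ((k:ℝ) - 1) * ((d:ℝ) * f v) := by
                  rw [Finset.card_erase_of_mem hw0A]
                  have : ((k - 1 : ℕ) : ℝ) = (k:ℝ) - 1 := by
                    have := hk1
                    push_cast [Nat.cast_sub this]
                    ring
                  rw [this]
          rw [hsplit]
          nlinarith
        rw [hE v hvs]
        have hdk : (1:ℝ) ≤ (d:ℝ) / k := by
          rw [le_div_iff₀ hkR]
          have : (k:ℝ) ≤ d := by exact_mod_cast hkd
          linarith
        have : (∑ w ∈ A v, E w) / k ≤ (d:ℝ) * f v - (d:ℝ)/k := by
          rw [div_le_iff₀ hkR]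
          have : ((d:ℝ) * f v - (d:ℝ)/k) * k = (k:ℝ) * ((d:ℝ) * f v) - d := by
            field_simp
          rw [this]
          exact hsum
        linarith
  intro v
  calc E v ≤ (d:ℝ) * f v := key v
    _ ≤ (d:ℝ) * ((Finset.univ.image lam).card : ℝ) := by
        have := hfle v
        have : (f v : ℝ) ≤ ((Finset.univ.image lam).card : ℝ) := by exact_mod_cast this
        nlinarith [Nat.cast_nonneg (α := ℝ) d]
end
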